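/- For every player i and every σ ∈ Σ_i: σ ∈ NSD^∞_i = ∩_{k≥0} NSD^k_i (i.e., σ survives iterated deletion of strongly dominated strategies) if and only if there exist a probability structure M appropriate for Γ and a state ω of M such that strat_i(ω) = σ and ω ∈ RAT^k_i(M) for every k ≥ 0. Moreover, when σ ∈ NSD^∞_i, the structure M can be taken to be finite with every subset of Ω measurable. -/

import Mathlib

open scoped BigOperators

noncomputable section

/-- A probability distribution on a finite type, represented as a weight function. -/
def IsDist {α : Type*} [Fintype α] (p : α → ℝ) : Prop :=
  (∀ a, 0 ≤ p a) ∧ ∑ a, p a = 1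

/-- The probability of a set under a weight function. -/
def probOf {α : Type*} [Fintype α] (p : α → ℝ) (E : Set α) : ℝ :=
  ∑ a, E.indicator p a

/-- A finite normal-form game with `n` players, all utilities in `[0,1]`. -/
structure Game (n : ℕ) where
  S : Fin n → Type
  fintypeS : ∀ i, Fintype (S i)
  decEqS : ∀ i, DecidableEq (S i)
  nonemptyS : ∀ i, Nonempty (S i)
  u : (i : Fin n) → ((j : Fin n) → S j) → ℝ
  u_mem : ∀ i σ, u i σ ∈ Set.Icc (0 : ℝ) 1

attribute [instance] Game.fintypeS Game.decEqS Game.nonemptyS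

namespace Game

variable {n : ℕ}

abbrev Prof (G : Game n) : Type := (j : Fin n) → G.S j

abbrev OppProf (G : Game n) (i : Fin n) : Type := (j : {j : Fin n // j ≠ i}) → G.S j.val

def stratOpp (G : Game n) (i : Fin n) (σ : G.Prof) : G.OppProf i := fun j => σ j.val

def combine (G : Game n) (i : Fin n) (s : G.S i) (τ : G.OppProf i) : G.Prof :=
  fun j => if h : j = i then cast (congrArg G.S h.symm) s else τ ⟨j, h⟩

/-- Expected utility of strategy `s` of player `i` under belief `b` on opponents' profiles. -/
def EU (G : Game n) (i : Fin n) (s : G.S i) (b : G.OppProf i → ℝ) : ℝ :=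
  ∑ τ : G.OppProf i, b τ * G.u i (G.combine i s τ)

/-- `s` is a best response to the belief `b`. -/
def BR (G : Game n) (i : Fin n) (s : G.S i) (b : G.OppProf i → ℝ) : Prop :=
  ∀ s' : G.S i, G.EU i s' b ≤ G.EU i s b

/-- Utility of mixed strategy `m` of player `i` against opponents' profile `τ`. -/
def EUmix (G : Game n) (i : Fin n) (m : G.S i → ℝ) (τ : G.OppProf i) : ℝ :=
  ∑ s : G.S i, m s * G.u i (G.combine i s τ)

/-- `s` is weakly dominated by the mixed strategy `m` with respect to `T`. -/
def WDom (G : Game n) (i : Fin n) (m : G.S i → ℝ) (s : G.S i)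
    (T : Set (G.OppProf i)) : Prop :=
  (∀ τ ∈ T, G.u i (G.combine i s τ) ≤ G.EUmix i m τ) ∧
    ∃ τ ∈ T, G.u i (G.combine i s τ) < G.EUmix i m τ

/-- `s` is strongly dominated by the mixed strategy `m` with respect to `T`. -/
def SDom (G : Game n) (i : Fin n) (m : G.S i → ℝ) (s : G.S i)
    (T : Set (G.OppProf i)) : Prop :=
  ∀ τ ∈ T, G.u i (G.combine i s τ) < G.EUmix i m τ

/-- Strategies of player `i` surviving `k` rounds of iterated deletion of weakly
dominated strategies. -/
def NWD (G : Game n) : ℕ → (i : Fin n) → Set (G.S i)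
  | 0 => fun _ => Set.univ
  | k + 1 => fun i =>
      {s | s ∈ NWD G k i ∧
        ¬∃ m : G.S i → ℝ, IsDist m ∧
          G.WDom i m s {τ : G.OppProf i | ∀ j, τ j ∈ NWD G k j.val}}

/-- Strategies of player `i` surviving `k` rounds of iterated deletion of strongly
dominated strategies. -/
def NSD (G : Game n) : ℕ → (i : Fin n) → Set (G.S i)
  | 0 => fun _ => Set.univ
  | k + 1 => fun i =>
      {s | s ∈ NSD G k i ∧
        ¬∃ m : G.S i → ℝ, IsDist m ∧
          G.SDom i m s {τ : G.OppProf i | ∀ j, τ j ∈ NSD G k j.val}}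

end Game

open MeasureTheory in
/-- A probability structure appropriate for the game `G`. -/
structure PStruct {n : ℕ} (G : Game n) where
  Ω : Type
  meas : MeasurableSpace Ω
  strat : Ω → G.Prof
  PR : Fin n → Ω → @Measure Ω meas
  PR_prob : ∀ i ω, @IsProbabilityMeasure Ω meas (PR i ω)
  strat_meas : ∀ (j : Fin n) (s : G.S j), MeasurableSet[meas] {ω | strat ω j = s}
  PR_own_strat : ∀ i ω, PR i ω {ω' | strat ω' i = strat ω i} = 1
  PR_meas : ∀ (i : Fin n) (π : @Measure Ω meas), MeasurableSet[meas] {ω | PR i ω = π}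
  PR_own_PR : ∀ i ω, PR i ω {ω' | PR i ω' = PR i ω} = 1

namespace PStruct

variable {n : ℕ} {G : Game n}

/-- The belief on opponents' strategy profiles induced by `PR i ω`. -/
def belief (M : PStruct G) (i : Fin n) (ω : M.Ω) : G.OppProf i → ℝ :=
  fun τ => (M.PR i ω {ω' | G.stratOpp i (M.strat ω') = τ}).toReal

/-- `(M,ω) ⊨ RAT_i`. -/
def RATi (M : PStruct G) (i : Fin n) (ω : M.Ω) : Prop :=
  G.BR i (M.strat ω i) (M.belief i ω)

/-- `(M,ω) ⊨ B_i E`. -/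
def Bel (M : PStruct G) (i : Fin n) (ω : M.Ω) (E : Set M.Ω) : Prop :=
  ∃ F, @MeasurableSet M.Ω M.meas F ∧ F ⊆ E ∧ M.PR i ω F = 1

/-- `(M,ω) ⊨ ⟨B_i⟩ E`. -/
def BelPos (M : PStruct G) (i : Fin n) (ω : M.Ω) (E : Set M.Ω) : Prop :=
  ∃ F, @MeasurableSet M.Ω M.meas F ∧ F ⊆ E ∧ 0 < M.PR i ω F

end PStruct

/-- The events `RATzero^k_i(M)`, defined simultaneously for all appropriate structures. -/
def RATzero {n : ℕ} (G : Game n) : (k : ℕ) → (M : PStruct G) → Fin n → Set M.Ω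
  | 0, _, _ => Set.univ
  | k + 1, M, i =>
      {ω | M.RATi i ω ∧
        M.Bel i ω {ω' | ∃ M' : PStruct G, ∃ ω'' : M'.Ω,
          M'.strat ω'' i = M.strat ω' i ∧ ω'' ∈ RATzero G k M' i} ∧
        M.Bel i ω {ω' | ∀ j, j ≠ i → ω' ∈ RATzero G k M j} ∧
        ∀ j, j ≠ i → ∀ s : G.S j,
          (∃ M' : PStruct G, ∃ ω' : M'.Ω, M'.strat ω' j = s ∧
              ∀ j', j' ≠ i → ω' ∈ RATzero G k M' j') →
            M.BelPos i ω {ω'' | M.strat ω'' j = s}}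

/-- The events `RAT^k_i(M)`. -/
def RATk {n : ℕ} (G : Game n) (M : PStruct G) : (k : ℕ) → Fin n → Set M.Ω
  | 0, _ => Set.univ
  | k + 1, i => {ω | M.RATi i ω ∧ M.Bel i ω {ω' | ∀ j, j ≠ i → ω' ∈ RATk G M k j}}

/-- The event that every player is rational. -/
def RATall {n : ℕ} {G : Game n} (M : PStruct G) : Set M.Ω := {ω | ∀ j, M.RATi j ω}

/-- The "everyone believes" operator iterated `k` times. -/
def Ek {n : ℕ} {G : Game n} (M : PStruct G) : ℕ → Set M.Ω → Set M.Ω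
  | 0, X => X
  | k + 1, X => {ω | ∀ j, M.Bel j ω (Ek M k X)}

/-- `σ` is a rationalizable strategy for player `i`. -/
def Rationalizable {n : ℕ} (G : Game n) (i : Fin n) (σ : G.S i) : Prop :=
  ∃ Z : (j : Fin n) → Set (G.S j),
    σ ∈ Z i ∧
    ∀ j, ∀ σ' ∈ Z j, ∃ μ : G.OppProf j → ℝ, IsDist μ ∧
      (∀ τ, 0 < μ τ → ∀ j', τ j' ∈ Z j'.val) ∧ G.BR j σ' μ

/-- `σ` is rationalizable′ for player `i`. -/
def Rationalizable' {n : ℕ} (G : Game n) (i : Fin n) (σ : G.S i) : Prop :=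
  ∃ X : ℕ → (j : Fin n) → Set (G.S j),
    (∀ j, X 0 j = Set.univ) ∧
    (∀ (k : ℕ) (j : Fin n), ∀ σ' ∈ X (k + 1) j, ∃ μ : G.OppProf j → ℝ, IsDist μ ∧
      (∀ τ, 0 < μ τ → ∀ j', τ j' ∈ X k j'.val) ∧ G.BR j σ' μ) ∧
    ∀ k, σ ∈ X k i

end

/-!
A strategy is not strongly dominated with respect to a set `T` of opponents' profiles iff it is
a best response to some belief supported on `T` (Pearce's lemma; the nontrivial direction is the
minimax theorem). Hence if `ω ∈ RAT^{k+1}_i`, the belief of `i` at `ω` is supported on profiles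
whose components lie in `RAT^k`, hence by induction in `NSD^k`, so `strat_i ω ∈ NSD^{k+1}_i`.
Conversely, the decreasing sequence `NSD^k` of finite sets stabilises at some `NSD^K`, and every
strategy there is a best response to a belief on `NSD^K`-profiles. On the finite space of all
profiles, let player `j` at `ω` be sure of `ω_j` and hold the belief chosen for `ω_j`; every
state all of whose components lie in `NSD^K` is then in every `RAT^k`, since the beliefs at such
states are concentrated on such states.
-/

open Matrix MeasureTheory

theorem Matrix.exists_mem_stdSimplex_vecMul_nonpos {ι κ : Type*} [Fintype ι] [Fintype κ]
    [Nonempty ι] (A : Matrix κ ι ℝ) (T : Set κ)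
    (h : ∀ m ∈ stdSimplex ℝ ι, ∃ τ ∈ T, (A *ᵥ m) τ ≤ 0) :
    ∃ μ ∈ stdSimplex ℝ κ, (∀ τ ∉ T, μ τ = 0) ∧ μ ᵥ* A ≤ 0 := by
  classical
  let B : (κ → ℝ) →ₗ[ℝ] (ι → ℝ) →ₗ[ℝ] ℝ := Matrix.toLinearMap₂' ℝ A
  set X := stdSimplex ℝ κ ∩ {μ | ∀ τ ∉ T, μ τ = 0}
  have single_mem_X : ∀ τ ∈ T, Pi.single τ 1 ∈ X := fun τ hτ =>
    ⟨single_mem_stdSimplex ℝ τ, fun τ' hτ' =>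
      Pi.single_eq_of_ne (by rintro rfl; exact hτ' hτ) _⟩
  obtain ⟨τ₀, hτ₀, -⟩ := h _ (single_mem_stdSimplex ℝ (Classical.arbitrary ι))
  have hXclosed : IsClosed {μ : κ → ℝ | ∀ τ ∉ T, μ τ = 0} := by
    simp only [Set.ofPred_forall]
    exact isClosed_iInter fun τ => isClosed_iInter fun _ =>
      isClosed_eq (continuous_apply τ) continuous_const
  have hXconv : Convex ℝ X :=
    (convex_stdSimplex ℝ κ).inter fun x hx y hy a b _ _ _ τ hτ => by simp [hx τ hτ, hy τ hτ]
  -- a saddle point of `μ ⬝ᵥ (A *ᵥ m)` (beliefs on `T` against mixed strategies);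
  -- by `h` its value is `≤ 0`
  obtain ⟨μ, hμ, m, hm, hsaddle⟩ := Sion.exists_isSaddlePointOn (f := fun μ m => B μ m)
    ⟨_, single_mem_X τ₀ hτ₀⟩ hXconv ((isCompact_stdSimplex ℝ κ).inter_right hXclosed)
    (fun m _ =>
      (B.flip m).continuous_of_finiteDimensional.lowerSemicontinuous.lowerSemicontinuousOn _)
    (fun m _ => ((B.flip m).convexOn hXconv).quasiconvexOn)
    (convex_stdSimplex ℝ ι) ⟨_, single_mem_stdSimplex ℝ (Classical.arbitrary ι)⟩
    (isCompact_stdSimplex ℝ ι)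
    (fun μ _ =>
      (B μ).continuous_of_finiteDimensional.upperSemicontinuous.upperSemicontinuousOn _)
    (fun μ _ => ((B μ).concaveOn (convex_stdSimplex ℝ ι)).quasiconcaveOn)
  obtain ⟨τ, hτ, hτm⟩ := h m hm
  refine ⟨μ, hμ.1, hμ.2, fun s => ?_⟩
  calc (μ ᵥ* A) s = B μ (Pi.single s 1) := by
        rw [Matrix.toLinearMap₂'_apply', dotProduct_mulVec, dotProduct_single, mul_one]
    _ ≤ B (Pi.single τ 1) m := hsaddle _ (single_mem_X τ hτ) _ (single_mem_stdSimplex ℝ s)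
    _ ≤ 0 := by rwa [Matrix.toLinearMap₂'_apply', single_dotProduct, one_mul]

theorem IsDist.exists_pos {α : Type*} [Fintype α] {p : α → ℝ} (hp : IsDist p) :
    ∃ a, 0 < p a := by
  obtain ⟨a, -, ha⟩ := Finset.exists_lt_of_sum_lt (s := Finset.univ) (f := 0) (g := p)
    (by simp [hp.2])
  exact ⟨a, ha⟩

noncomputable def IsDist.toPMF {α : Type*} [Fintype α] {p : α → ℝ} (hp : IsDist p) : PMF α :=
  PMF.ofFintype (fun a => ENNReal.ofReal (p a)) <| by
    rw [← ENNReal.ofReal_sum_of_nonneg fun a _ => hp.1 a, hp.2, ENNReal.ofReal_one]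

theorem IsDist.toReal_toPMF {α : Type*} [Fintype α] {p : α → ℝ} (hp : IsDist p) (a : α) :
    (hp.toPMF a).toReal = p a :=
  ENNReal.toReal_ofReal (hp.1 a)

theorem IsDist.mem_support_toPMF {α : Type*} [Fintype α] {p : α → ℝ} (hp : IsDist p) {a : α} :
    a ∈ hp.toPMF.support ↔ 0 < p a :=
  (PMF.mem_support_ofFintype_iff _ a).trans (ENNReal.ofReal_eq_zero.not.trans not_le)

theorem PMF.toMeasure_map_eq_one_iff {α β : Type*} [MeasurableSpace β] (p : PMF α) (f : α → β)
    {E : Set β} (hE : MeasurableSet E) :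
    (p.map f).toMeasure E = 1 ↔ ∀ a ∈ p.support, f a ∈ E := by
  rw [PMF.toMeasure_apply_eq_one_iff _ hE, PMF.support_map, Set.image_subset_iff]
  rfl

namespace Game

variable {n : ℕ} (G : Game n)

@[simp]
theorem combine_self (i : Fin n) (s : G.S i) (τ : G.OppProf i) : G.combine i s τ i = s := by
  simp [combine]

@[simp]
theorem stratOpp_combine (i : Fin n) (s : G.S i) (τ : G.OppProf i) :
    G.stratOpp i (G.combine i s τ) = τ := by
  funext j
  simp [stratOpp, combine, j.2]

theorem combine_mem_pi_iff {i : Fin n} {s : G.S i} {τ : G.OppProf i}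
    {Z : (j : Fin n) → Set (G.S j)} :
    (∀ j, G.combine i s τ j ∈ Z j) ↔ s ∈ Z i ∧ ∀ j, τ j ∈ Z j.val := by
  refine ⟨fun h => ⟨by simpa using h i, fun j => by simpa [combine, j.2] using h j⟩,
    fun ⟨hs, hτ⟩ j => ?_⟩
  by_cases hj : j = i
  · subst hj
    simpa using hs
  · simpa [combine, hj] using hτ ⟨j, hj⟩

theorem sum_mul_EUmix (i : Fin n) (μ : G.OppProf i → ℝ) (m : G.S i → ℝ) :
    ∑ τ, μ τ * G.EUmix i m τ = ∑ s, m s * G.EU i s μ := by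
  simp only [EUmix, EU, Finset.mul_sum]
  rw [Finset.sum_comm]
  exact Finset.sum_congr rfl fun _ _ => Finset.sum_congr rfl fun _ _ => by ring

theorem exists_BR_iff_not_SDom {i : Fin n} {s : G.S i} {T : Set (G.OppProf i)} :
    (∃ μ, IsDist μ ∧ (∀ τ, 0 < μ τ → τ ∈ T) ∧ G.BR i s μ) ↔
      ¬∃ m, IsDist m ∧ G.SDom i m s T := by
  constructor
  · rintro ⟨μ, hμ, hT, hbr⟩ ⟨m, hm, hdom⟩
    obtain ⟨τ₀, hτ₀⟩ := hμ.exists_pos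
    have hlt : G.EU i s μ < ∑ τ, μ τ * G.EUmix i m τ := by
      refine Finset.sum_lt_sum (fun τ _ => ?_) ⟨τ₀, Finset.mem_univ _, ?_⟩
      · rcases (hμ.1 τ).eq_or_lt with hτ | hτ
        · simp [← hτ]
        · exact mul_le_mul_of_nonneg_left (hdom τ (hT τ hτ)).le hτ.le
      · exact mul_lt_mul_of_pos_left (hdom τ₀ (hT τ₀ hτ₀)) hτ₀
    have hle : ∑ s', m s' * G.EU i s' μ ≤ G.EU i s μ := by
      calc ∑ s', m s' * G.EU i s' μ ≤ ∑ s', m s' * G.EU i s μ :=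
            Finset.sum_le_sum fun s' _ => mul_le_mul_of_nonneg_left (hbr s') (hm.1 s')
        _ = G.EU i s μ := by rw [← Finset.sum_mul, hm.2, one_mul]
    linarith [G.sum_mul_EUmix i μ m]
  · intro hnd
    let A : Matrix (G.OppProf i) (G.S i) ℝ :=
      Matrix.of fun τ s' => G.u i (G.combine i s' τ) - G.u i (G.combine i s τ)
    have hA : ∀ m, IsDist m → ∀ τ,
        (A *ᵥ m) τ = G.EUmix i m τ - G.u i (G.combine i s τ) := by
      intro m hm τ
      have hconst : ∑ s', m s' * G.u i (G.combine i s τ) = G.u i (G.combine i s τ) := by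
        rw [← Finset.sum_mul, hm.2, one_mul]
      rw [EUmix, ← hconst, ← Finset.sum_sub_distrib]
      exact Finset.sum_congr rfl fun _ _ => by simp only [A, of_apply]; ring
    obtain ⟨μ, hμ, hT, hμA⟩ := Matrix.exists_mem_stdSimplex_vecMul_nonpos A T fun m hm => by
      by_contra! hpos
      exact hnd ⟨m, hm, fun τ hτ => by linarith [hpos τ hτ, hA m hm τ]⟩
    refine ⟨μ, hμ, fun τ hτ => not_not.1 fun h => hτ.ne' (hT τ h), fun s' => ?_⟩
    have : (μ ᵥ* A) s' = G.EU i s' μ - G.EU i s μ := by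
      simp only [A, vecMul, dotProduct, of_apply, mul_sub, Finset.sum_sub_distrib, EU]
    exact sub_nonpos.1 (this ▸ hμA s')

theorem antitone_NSD : Antitone G.NSD :=
  antitone_nat_of_succ_le fun _ _ _ hs => hs.1

theorem exists_NSD_succ_eq : ∃ K, G.NSD (K + 1) = G.NSD K := by
  obtain ⟨K, hK⟩ := WellFoundedLT.antitone_chain_condition G.antitone_NSD
  exact ⟨K, (hK _ K.le_succ).symm⟩

theorem rationalizable_of_forall_mem_NSD {i : Fin n} {σ : G.S i}
    (h : ∀ k, σ ∈ G.NSD k i) : Rationalizable G i σ := by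
  obtain ⟨K, hK⟩ := G.exists_NSD_succ_eq
  refine ⟨G.NSD K, h K, fun j s hs => G.exists_BR_iff_not_SDom.2 ?_⟩
  rw [← hK] at hs
  exact hs.2

end Game

namespace PStruct

variable {n : ℕ} {G : Game n}

theorem measurableSet_stratOpp_eq (M : PStruct G) (i : Fin n) (τ : G.OppProf i) :
    MeasurableSet[M.meas] {ω | G.stratOpp i (M.strat ω) = τ} := by
  have : {ω | G.stratOpp i (M.strat ω) = τ} = ⋂ j, {ω | M.strat ω j.val = τ j} := by
    ext ω
    simp [funext_iff, Game.stratOpp]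
  let _ := M.meas
  rw [this]
  exact .iInter fun j => M.strat_meas j (τ j)

theorem isDist_belief (M : PStruct G) (i : Fin n) (ω : M.Ω) : IsDist (M.belief i ω) := by
  let _ := M.meas
  have _ := M.PR_prob i ω
  refine ⟨fun _ => ENNReal.toReal_nonneg, ?_⟩
  have hsum := sum_measure_preimage_singleton (μ := M.PR i ω) Finset.univ
    (f := fun ω' => G.stratOpp i (M.strat ω')) fun τ _ => M.measurableSet_stratOpp_eq i τ
  rw [Finset.coe_univ, Set.preimage_univ, measure_univ] at hsum
  simp only [belief]
  rw [← ENNReal.toReal_sum fun τ _ => measure_ne_top _ _]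
  exact (congrArg ENNReal.toReal hsum).trans ENNReal.toReal_one

theorem exists_mem_of_Bel_of_belief_pos {M : PStruct G} {i : Fin n} {ω : M.Ω} {E : Set M.Ω}
    {τ : G.OppProf i} (hE : M.Bel i ω E) (hτ : 0 < M.belief i ω τ) :
    ∃ ω' ∈ E, G.stratOpp i (M.strat ω') = τ := by
  let _ := M.meas
  have _ := M.PR_prob i ω
  obtain ⟨F, hF, hFE, hF1⟩ := hE
  by_contra! hne
  have hsub : {ω' | G.stratOpp i (M.strat ω') = τ} ⊆ Fᶜ := fun ω' hω' hω'F =>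
    hne ω' (hFE hω'F) hω'
  have hFc : M.PR i ω Fᶜ = 0 := by rw [prob_compl_eq_zero_iff hF, hF1]
  simp [belief, measure_mono_null hsub hFc] at hτ

noncomputable def ofBeliefs (ν : (j : Fin n) → G.S j → PMF (G.OppProf j)) : PStruct G where
  Ω := G.Prof
  meas := ⊤
  strat := id
  PR j ω := @PMF.toMeasure _ ⊤ ((ν j (ω j)).map (G.combine j (ω j)))
  PR_prob _ _ := @PMF.toMeasure.isProbabilityMeasure _ ⊤ _
  strat_meas _ _ := MeasurableSpace.measurableSet_top
  PR_own_strat j ω :=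
    (@PMF.toMeasure_map_eq_one_iff _ _ ⊤ _ _ _ MeasurableSpace.measurableSet_top).2
      fun τ _ => G.combine_self j (ω j) τ
  PR_meas _ _ := MeasurableSpace.measurableSet_top
  PR_own_PR j ω :=
    (@PMF.toMeasure_map_eq_one_iff _ _ ⊤ _ _ _ MeasurableSpace.measurableSet_top).2
      fun τ _ => by simp only [Set.mem_ofPred_eq, G.combine_self]

variable {ν : (j : Fin n) → G.S j → PMF (G.OppProf j)}

theorem ofBeliefs_PR_eq_one_iff {j : Fin n} {ω : G.Prof} {E : Set G.Prof} :
    (ofBeliefs ν).PR j ω E = 1 ↔ ∀ τ ∈ (ν j (ω j)).support, G.combine j (ω j) τ ∈ E :=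
  @PMF.toMeasure_map_eq_one_iff _ _ ⊤ _ _ _ MeasurableSpace.measurableSet_top

theorem ofBeliefs_belief (j : Fin n) (ω : G.Prof) :
    (ofBeliefs ν).belief j ω = fun τ => (ν j (ω j) τ).toReal := by
  let _ : MeasurableSpace G.Prof := ⊤
  funext τ
  have hpre : G.combine j (ω j) ⁻¹' {ω' | G.stratOpp j ω' = τ} = {τ} := by
    ext τ'
    simp
  change (@PMF.toMeasure G.Prof ⊤ ((ν j (ω j)).map (G.combine j (ω j)))
    {ω' | G.stratOpp j ω' = τ}).toReal = _
  rw [PMF.toMeasure_apply_eq_toOuterMeasure_apply _ MeasurableSpace.measurableSet_top,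
    PMF.toOuterMeasure_map_apply, hpre, PMF.toOuterMeasure_apply_singleton]

end PStruct

theorem RATk_succ_subset {n : ℕ} {G : Game n} (M : PStruct G) (k : ℕ) (i : Fin n) :
    RATk G M (k + 1) i ⊆ RATk G M k i := by
  induction k generalizing i with
  | zero => exact fun _ _ => trivial
  | succ k ih =>
    rintro ω ⟨hrat, F, hF, hFE, hF1⟩
    exact ⟨hrat, F, hF, fun ω' hω' j hj => ih j (hFE hω' j hj), hF1⟩

theorem strat_mem_NSD_of_mem_RATk {n : ℕ} {G : Game n} (M : PStruct G) {k : ℕ} {i : Fin n}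
    {ω : M.Ω} (h : ω ∈ RATk G M k i) : M.strat ω i ∈ G.NSD k i := by
  induction k generalizing i ω with
  | zero => trivial
  | succ k ih =>
    refine ⟨ih (RATk_succ_subset M k i h), G.exists_BR_iff_not_SDom.1
      ⟨M.belief i ω, M.isDist_belief i ω, fun τ hτ j => ?_, h.1⟩⟩
    obtain ⟨ω', hω', rfl⟩ := PStruct.exists_mem_of_Bel_of_belief_pos h.2 hτ
    exact ih (hω' j j.2)

theorem mem_RATk_ofBeliefs {n : ℕ} {G : Game n}
    {ν : (j : Fin n) → G.S j → PMF (G.OppProf j)} {Z : (j : Fin n) → Set (G.S j)}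
    (hν : ∀ j, ∀ s ∈ Z j, (∀ τ ∈ (ν j s).support, ∀ j', τ j' ∈ Z j'.val) ∧
      G.BR j s fun τ => (ν j s τ).toReal)
    (k : ℕ) (j : Fin n) {ω : G.Prof} (hω : ∀ j, ω j ∈ Z j) :
    ω ∈ RATk G (PStruct.ofBeliefs ν) k j := by
  induction k generalizing j ω with
  | zero => trivial
  | succ k ih =>
    refine ⟨?_, {ω' | ∀ j, ω' j ∈ Z j}, MeasurableSpace.measurableSet_top,
      fun ω' hω' j' _ => ih j' hω', PStruct.ofBeliefs_PR_eq_one_iff.2 fun τ hτ => ?_⟩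
    · change G.BR j (ω j) ((PStruct.ofBeliefs ν).belief j ω)
      rw [PStruct.ofBeliefs_belief]
      exact (hν j (ω j) (hω j)).2
    · exact G.combine_mem_pi_iff.2 ⟨hω j, (hν j (ω j) (hω j)).1 τ hτ⟩

theorem exists_finite_PStruct_of_rationalizable {n : ℕ} (G : Game n) {i : Fin n} {σ : G.S i}
    (h : Rationalizable G i σ) :
    ∃ (M : PStruct G) (ω : M.Ω), Finite M.Ω ∧ M.meas = ⊤ ∧
      M.strat ω i = σ ∧ ∀ k : ℕ, ω ∈ RATk G M k i := by
  obtain ⟨Z, hσ, hZ⟩ := h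
  have : ∀ j, ∀ s ∈ Z j, ∃ ν : PMF (G.OppProf j),
      (∀ τ ∈ ν.support, ∀ j', τ j' ∈ Z j'.val) ∧ G.BR j s fun τ => (ν τ).toReal := by
    intro j s hs
    obtain ⟨μ, hμ, hsupp, hbr⟩ := hZ j s hs
    refine ⟨hμ.toPMF, fun τ hτ => hsupp τ (hμ.mem_support_toPMF.1 hτ), ?_⟩
    simpa only [hμ.toReal_toPMF] using hbr
  have _ : ∀ j, Nonempty (PMF (G.OppProf j)) := fun j => ⟨PMF.pure (Classical.arbitrary _)⟩
  choose! ν hν using this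
  obtain ⟨τ, hτ⟩ := (ν i σ).support_nonempty
  have hω : ∀ j, G.combine i σ τ j ∈ Z j :=
    G.combine_mem_pi_iff.2 ⟨hσ, (hν i σ hσ).1 τ hτ⟩
  exact ⟨PStruct.ofBeliefs ν, G.combine i σ τ, inferInstanceAs (Finite G.Prof), rfl,
    G.combine_self i σ τ, fun k => mem_RATk_ofBeliefs hν k i hω⟩

/-- characterization of surviving iterated deletion of strongly dominated
strategies via `RAT^k_i` for all `k`; moreover the structure can be taken finite with
every subset measurable. -/
theorem iterated_strict_dominance_limit_characterization {n : ℕ} (G : Game n) (i : Fin n)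
    (σ : G.S i) :
    ((∀ k : ℕ, σ ∈ Game.NSD G k i) ↔
      ∃ (M : PStruct G) (ω : M.Ω), M.strat ω i = σ ∧ ∀ k : ℕ, ω ∈ RATk G M k i) ∧
    ((∀ k : ℕ, σ ∈ Game.NSD G k i) →
      ∃ (M : PStruct G) (ω : M.Ω), Finite M.Ω ∧ M.meas = ⊤ ∧
        M.strat ω i = σ ∧ ∀ k : ℕ, ω ∈ RATk G M k i) := by
  have complete := fun h : ∀ k, σ ∈ G.NSD k i =>
    exists_finite_PStruct_of_rationalizable G (G.rationalizable_of_forall_mem_NSD h)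
  refine ⟨⟨fun h => ?_, ?_⟩, complete⟩
  · obtain ⟨M, ω, -, -, hσ, hRAT⟩ := complete h
    exact ⟨M, ω, hσ, hRAT⟩
  · rintro ⟨M, ω, rfl, hRAT⟩ k
    exact strat_mem_NSD_of_mem_RATk M (hRAT k)
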